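/- Let X = {a,b} and let g_1, g_2 : X* → X* be morphisms with g_1(a) = ε, g_1(b) = u, g_2(a) = a^t, g_2(b) = v, where t ≥ 0 and both u and v contain at least one occurrence of b. Then g_1 g_2 = g_2 g_1 if and only if at least one of the following holds: (i) g_1 = g_2; (ii) g_2 is the identity morphism; (iii) t = 0 and uv = vu; (iv) u and v are both powers of b; (v) t = 1 and there exist nonnegative integers α, β, i, j such that u = (a^α b a^β)^i and v = (b a^{α+β})^j b. -/

import Mathlib

/-- Words over the binary alphabet: `false` is the letter `a`, `true` is the letter `b`. -/
abbrev Word := List Bool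

/-- The morphism of the free monoid determined by the images `g` of the letters. -/
def applyG (g : Bool → Word) (w : Word) : Word := w.flatMap g

/-- `a^n`. -/
def rep (n : ℕ) : Word := List.replicate n false

/-- `b a^{α 1} b a^{α 2} ⋯ b a^{α (p-1)} b`, a word with `p` occurrences of `b`. -/
def blockWord (p : ℕ) (α : ℕ → ℕ) : Word :=
  ((List.range (p - 1)).flatMap fun i => true :: rep (α (i + 1))) ++ [true]

/-- `w^k`. -/
def wordPow (w : Word) (k : ℕ) : Word := (List.replicate k w).flatten

/-- `u` and `v` are `a`-conjugates. -/
def AConj (u v : Word) : Prop :=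
  ∃ p q r s : ℕ, ∃ w : Word,
    u = rep p ++ w ++ rep q ∧ v = rep r ++ w ++ rep s ∧ p + q = r + s

/-- `w` is the infinite word `ω(g)`: for every `n`, the word obtained from `g^n(b)` by deleting
all occurrences of `a` preceding the first occurrence of `b` is a prefix of `w`. -/
def IsOmega (g : Bool → Word) (w : ℕ → Bool) : Prop :=
  ∀ n k : ℕ, ∀ hk : k < (((applyG g)^[n] [true]).dropWhile (fun x => !x)).length,
    (((applyG g)^[n] [true]).dropWhile (fun x => !x)).get ⟨k, hk⟩ = w k

/-- `Aw w i` (for `i ≥ 1`): the number of occurrences of `a` in `w` strictly between the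
`i`-th and `(i+1)`-th occurrences of `b` in `w`. -/
noncomputable def Aw (w : ℕ → Bool) (i : ℕ) : ℕ :=
  Nat.nth (fun n => w n = true) i - Nat.nth (fun n => w n = true) (i - 1) - 1

/-!
Commutation of the two morphisms reduces to their agreement on `b`, that is `u^m = g₂(u)` with
`m = |v|_b`. For `t = 0` this reads `u^m = v^n`, hence `uv = vu` (Lyndon–Schützenberger).

For `t ≥ 1`, comparing the leading runs of `a` shows that `v` starts with `b` and that `g₂` fixes
the leading block `a^p` of `u = a^p w`, so the conjugate `u' = w a^p` satisfies `g₂(u') = u'^m`.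
Write `u' = b a^{P₁} ⋯ b a^{Pₙ}` and `v = b a^{Q₁} ⋯ b a^{Q_{m-1}} b a^z`. Then `g₂` maps each
gap `y` of `u'` to the gaps `Q₁, …, Q_{m-1}, z + t y` of `u'^m`, so a largest gap `M` satisfies
`z + t M ≤ M`: either all gaps vanish (`u, v ∈ b*`), or `t = 1` and `z = 0`. In the latter case the
gap function `G` of `u'^ω` satisfies `G (i + n) = G i`, `G (m i) = G i` and `G (m j + r) = G r`
for `0 < r < m`. For `m ≥ 2` this forces `G` to be constant: every residue `r` is represented by
some `i ≡ r (mod m)` with `n ∣ m^a i`. A constant gap sequence is exactly case (v).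
-/

lemma rep_add (p q : ℕ) : rep (p + q) = rep p ++ rep q := List.replicate_add ..

lemma count_true_rep (p : ℕ) : (rep p).count true = 0 := by simp [rep, List.count_replicate]

section WordPow

lemma wordPow_zero (w : Word) : wordPow w 0 = [] := rfl

lemma wordPow_succ (w : Word) (k : ℕ) : wordPow w (k + 1) = w ++ wordPow w k := by
  simp [wordPow, List.replicate_succ]

lemma wordPow_add (w : Word) (j k : ℕ) : wordPow w (j + k) = wordPow w j ++ wordPow w k := by
  rw [wordPow, List.replicate_add, List.flatten_append]; rfl

lemma wordPow_succ' (w : Word) (k : ℕ) : wordPow w (k + 1) = wordPow w k ++ w := by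
  rw [wordPow_add, wordPow_succ, wordPow_zero, List.append_nil]

lemma wordPow_mul (w : Word) (j k : ℕ) : wordPow w (j * k) = wordPow (wordPow w j) k := by
  induction k with
  | zero => rfl
  | succ k ih => rw [Nat.mul_succ, wordPow_add, wordPow_succ', ih]

lemma count_wordPow (x : Bool) (w : Word) (k : ℕ) : (wordPow w k).count x = k * w.count x := by
  induction k with
  | zero => simp [wordPow_zero]
  | succ k ih => rw [wordPow_succ, List.count_append, ih]; ring

lemma wordPow_append_comm (w : Word) (k : ℕ) : wordPow w k ++ w = w ++ wordPow w k := by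
  rw [← wordPow_succ, wordPow_succ']

lemma wordPow_append_append_comm (x w : Word) (k : ℕ) :
    wordPow (x ++ w) k ++ x = x ++ wordPow (w ++ x) k := by
  induction k with
  | zero => simp [wordPow_zero]
  | succ k ih => simp only [wordPow_succ, List.append_assoc, ih]

lemma isPrefix_wordPow (w : Word) {k : ℕ} (hk : k ≠ 0) : w <+: wordPow w k := by
  obtain ⟨k, rfl⟩ := Nat.exists_eq_succ_of_ne_zero hk
  rw [wordPow_succ]
  exact List.prefix_append _ _

lemma wordPow_rep_true_rep_succ (α β j : ℕ) :
    wordPow (rep α ++ [true] ++ rep β) (j + 1) =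
      rep α ++ (wordPow ([true] ++ rep (α + β)) j ++ [true]) ++ rep β := by
  rw [wordPow_succ', List.append_assoc (rep α) [true], ← List.append_assoc (wordPow _ j),
    wordPow_append_append_comm, List.append_assoc [true], ← rep_add, Nat.add_comm β α]
  simp only [List.append_assoc]

end WordPow

section Morphism

variable (g h : Bool → Word)

lemma applyG_nil : applyG g [] = [] := rfl

lemma applyG_cons (x : Bool) (w : Word) : applyG g (x :: w) = g x ++ applyG g w := rfl

lemma applyG_singleton (x : Bool) : applyG g [x] = g x := by simp [applyG]

lemma applyG_append (w w' : Word) : applyG g (w ++ w') = applyG g w ++ applyG g w' := by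
  simp [applyG]

lemma applyG_comp : applyG g ∘ applyG h = applyG (applyG g ∘ h) := by
  funext w
  simp only [Function.comp_apply, applyG, List.flatMap_assoc]
  rfl

lemma applyG_injective : Function.Injective applyG := by
  intro g h hgh
  funext x
  simpa only [applyG_singleton] using congrFun hgh [x]

lemma applyG_wordPow (w : Word) (k : ℕ) : applyG g (wordPow w k) = wordPow (applyG g w) k := by
  induction k with
  | zero => rfl
  | succ k ih => rw [wordPow_succ, applyG_append, ih, wordPow_succ]

lemma applyG_replicate_true (k : ℕ) : applyG g (List.replicate k true) = wordPow (g true) k := by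
  induction k with
  | zero => rfl
  | succ k ih => rw [List.replicate_succ, applyG_cons, ih, wordPow_succ]

lemma applyG_rep {t : ℕ} (ha : g false = rep t) (p : ℕ) : applyG g (rep p) = rep (t * p) := by
  induction p with
  | zero => rfl
  | succ p ih => rw [rep, List.replicate_succ, applyG_cons, ha, ← rep, ih, ← rep_add]; ring_nf

lemma applyG_eq_wordPow_count_true (ha : g false = []) (w : Word) :
    applyG g w = wordPow (g true) (w.count true) := by
  induction w with
  | nil => rfl
  | cons x w ih => cases x <;> simp [applyG_cons, ih, ha, wordPow_succ]

lemma applyG_eq_self (ha : g false = [false]) (hb : g true = [true]) (w : Word) :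
    applyG g w = w := by
  induction w with
  | nil => rfl
  | cons x w ih => cases x <;> simp [applyG_cons, ha, hb, ih]

end Morphism

section Commuting

theorem append_comm_of_wordPow_eq {u v : Word} {m n : ℕ} (hm : m ≠ 0) (hn : n ≠ 0)
    (h : wordPow u m = wordPow v n) : u ++ v = v ++ u := by
  wlog huv : u.length ≤ v.length generalizing u v m n
  · exact (this hn hm h.symm (by omega)).symm
  obtain ⟨w, rfl⟩ : u <+: v :=
    List.prefix_of_prefix_length_le (h ▸ isPrefix_wordPow u hm) (isPrefix_wordPow v hn) huv
  have h' : wordPow u m = wordPow (w ++ u) n := by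
    apply List.append_cancel_left (as := u)
    rw [← wordPow_append_comm, h, wordPow_append_append_comm]
  have hwu : u ++ w = w ++ u := by
    apply List.IsPrefix.eq_of_length _ (by simp [Nat.add_comm])
    exact List.prefix_of_prefix_length_le (isPrefix_wordPow _ hn)
      (h ▸ h' ▸ isPrefix_wordPow _ hn) (by simp [Nat.add_comm])
  rw [List.append_assoc, ← hwu]

theorem exists_wordPow_of_append_comm (u v : Word) (h : u ++ v = v ++ u) :
    ∃ z k l, u = wordPow z k ∧ v = wordPow z l := by
  induction hs : u.length + v.length using Nat.strong_induction_on generalizing u v with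
  | _ s ih =>
  wlog huv : u.length ≤ v.length generalizing u v
  · obtain ⟨z, k, l, hu, hv⟩ := this v u h.symm (by omega) (by omega)
    exact ⟨z, l, k, hv, hu⟩
  rcases eq_or_ne u [] with rfl | hu
  · exact ⟨v, 0, 1, rfl, by simp [wordPow_succ, wordPow_zero]⟩
  obtain ⟨w, rfl⟩ : u <+: v :=
    List.prefix_of_prefix_length_le (h ▸ List.prefix_append u v) (List.prefix_append v u) huv
  have huw : u ++ w = w ++ u := by simpa using h
  have hlt : u.length + w.length < s := by
    have := List.length_pos_iff.mpr hu
    rw [List.length_append] at hs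
    omega
  obtain ⟨z, k, l, rfl, rfl⟩ := ih _ hlt u w huw rfl
  exact ⟨z, k, k + l, rfl, (wordPow_add z k l).symm⟩

end Commuting

section GapWord

/-- `gapWord [g₁, …, gₖ] = b a^g₁ b a^g₂ ⋯ b a^gₖ`. -/
def gapWord (L : List ℕ) : Word := L.flatMap fun g => true :: rep g

lemma gapWord_cons (g : ℕ) (L : List ℕ) : gapWord (g :: L) = true :: (rep g ++ gapWord L) := rfl

lemma gapWord_append (L L' : List ℕ) : gapWord (L ++ L') = gapWord L ++ gapWord L' := by
  simp [gapWord]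

lemma gapWord_concat_append_rep (L : List ℕ) (x p : ℕ) :
    gapWord (L ++ [x]) ++ rep p = gapWord (L ++ [x + p]) := by
  simp [gapWord, rep_add]

lemma wordPow_gapWord (L : List ℕ) (k : ℕ) :
    wordPow (gapWord L) k = gapWord (List.replicate k L).flatten := by
  induction k with
  | zero => rfl
  | succ k ih => rw [wordPow_succ, ih, List.replicate_succ, List.flatten_cons, gapWord_append]

lemma gapWord_replicate (k γ : ℕ) : gapWord (List.replicate k γ) = wordPow ([true] ++ rep γ) k := by
  induction k with
  | zero => rfl
  | succ k ih => rw [List.replicate_succ, gapWord_cons, ih, wordPow_succ]; rfl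

lemma gapWord_eq_replicate_true {L : List ℕ} (hL : ∀ g ∈ L, g = 0) :
    gapWord L = List.replicate L.length true := by
  induction L with
  | nil => rfl
  | cons g L ih =>
    simp only [List.mem_cons, forall_eq_or_imp] at hL
    rw [gapWord_cons, hL.1, ih hL.2]
    rfl

lemma exists_eq_rep_append_gapWord (w : Word) :
    ∃ c L, w = rep c ++ gapWord L ∧ L.length = w.count true := by
  induction w with
  | nil => exact ⟨0, [], rfl, rfl⟩
  | cons x w ih =>
    obtain ⟨c, L, rfl, hL⟩ := ih
    cases x
    · exact ⟨c + 1, L, rfl, by simpa using hL⟩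
    · exact ⟨0, c :: L, rfl, by simpa [count_true_rep] using hL⟩

lemma rep_append_inj {c c' : ℕ} {x x' : Word} (hx : x.head? ≠ some false)
    (hx' : x'.head? ≠ some false) (h : rep c ++ x = rep c' ++ x') : c = c' ∧ x = x' := by
  induction c generalizing c' with
  | zero =>
    cases c' with
    | zero => exact ⟨rfl, h⟩
    | succ c' =>
      simp only [rep, List.replicate_succ, List.replicate_zero, List.nil_append,
        List.cons_append] at h
      simp [h] at hx
  | succ c ih =>
    cases c' with
    | zero =>
      simp only [rep, List.replicate_succ, List.replicate_zero, List.nil_append,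
        List.cons_append] at h
      simp [← h] at hx'
    | succ c' =>
      obtain ⟨rfl, rfl⟩ := ih (c' := c') (by simpa [rep, List.replicate_succ] using h)
      exact ⟨rfl, rfl⟩

lemma head?_gapWord_ne (L : List ℕ) : (gapWord L).head? ≠ some false := by
  cases L <;> simp [gapWord]

lemma gapWord_injective : Function.Injective gapWord := by
  intro L
  induction L with
  | nil => intro L' h; cases L' <;> simp_all [gapWord]
  | cons g L ih =>
    intro L' h
    cases L' with
    | nil => simp [gapWord] at h
    | cons g' L' =>
      rw [gapWord_cons, gapWord_cons, List.cons.injEq] at h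
      obtain ⟨rfl, hL⟩ := rep_append_inj (head?_gapWord_ne L) (head?_gapWord_ne L') h.2
      rw [ih hL]

lemma applyG_gapWord {g : Bool → Word} {t z : ℕ} {Q : List ℕ} (ha : g false = rep t)
    (hb : g true = gapWord (Q ++ [z])) (L : List ℕ) :
    applyG g (gapWord L) = gapWord (L.flatMap fun y => Q ++ [z + t * y]) := by
  induction L with
  | nil => rfl
  | cons y L ih =>
    rw [gapWord_cons, applyG_cons, applyG_append, applyG_rep g ha, ih, hb, ← List.append_assoc,
      gapWord_concat_append_rep, ← gapWord_append, List.flatMap_cons]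

end GapWord

section Periodic

lemma exists_pow_add_succ_eq_pow {M : Type*} [Monoid M] [Finite M] (x : M) :
    ∃ a d : ℕ, x ^ (a + (d + 1)) = x ^ a := by
  obtain ⟨i, j, hij, h⟩ := Finite.exists_ne_map_eq_of_infinite fun k : ℕ => x ^ k
  rcases lt_or_gt_of_ne hij with hlt | hlt
  · exact ⟨i, j - i - 1, by rw [show i + (j - i - 1 + 1) = j by omega]; exact h.symm⟩
  · exact ⟨j, i - j - 1, by rw [show j + (i - j - 1 + 1) = i by omega]; exact h⟩

theorem apply_eq_apply_zero_of_periodic {α : Type*} {f : ℕ → α} {m n : ℕ} (hm : 2 ≤ m)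
    (hn : n ≠ 0) (hper : ∀ i, f (i + n) = f i) (hmul : ∀ i, f (m * i) = f i)
    (hres : ∀ j r, 0 < r → r < m → f (m * j + r) = f r) (i : ℕ) : f i = f 0 := by
  have hmult : ∀ c, f (n * c) = f 0 := by
    intro c
    induction c with
    | zero => rfl
    | succ c ih => rw [Nat.mul_succ, hper, ih]
  have hpow : ∀ e j, f (m ^ e * j) = f j := by
    intro e
    induction e with
    | zero => simp
    | succ e ih => intro j; rw [pow_succ', mul_assoc, hmul, ih]
  have hres0 : ∀ r, 0 < r → r < m → f r = f 0 := by
    intro r hr hrm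
    have : NeZero n := ⟨hn⟩
    obtain ⟨a, d, had⟩ := exists_pow_add_succ_eq_pow (m : ZMod n)
    -- with `j = r (n - 1) m^d`: `m j + r ≡ r (mod m)`, and since `m^(a+d+1) ≡ m^a (mod n)`,
    -- `m^a (m j + r) ≡ r m^a ((n - 1) + 1) ≡ 0 (mod n)`
    obtain ⟨c, hc⟩ : n ∣ m ^ a * (m * (r * (n - 1) * m ^ d) + r) := by
      rw [← ZMod.natCast_eq_zero_iff]
      obtain ⟨n', rfl⟩ := Nat.exists_eq_succ_of_ne_zero hn
      have hn' : ((n' : ℕ) : ZMod (n' + 1)) = -1 := by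
        rw [eq_neg_iff_add_eq_zero]; exact_mod_cast ZMod.natCast_self (n' + 1)
      push_cast
      rw [hn']
      linear_combination (-(r : ZMod (n' + 1))) * had
    rw [← hres _ r hr hrm, ← hpow a, hc, hmult]
  induction i using Nat.strong_induction_on with
  | _ i ih =>
  rcases Nat.eq_zero_or_pos (i % m) with h0 | hpos
  · rcases Nat.eq_zero_or_pos i with rfl | hi
    · rfl
    rw [← Nat.div_add_mod i m, h0, add_zero, hmul]
    exact ih _ (Nat.div_lt_self hi (by omega))
  · have hlt := Nat.mod_lt i (by omega : m > 0)
    rw [← Nat.div_add_mod i m, hres _ _ hpos hlt, hres0 _ hpos hlt]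

end Periodic

section BlockIndex

lemma getElem?_flatMap_of_length_eq {α β : Type*} {h : α → List β} {m : ℕ} (L : List α)
    (hL : ∀ x ∈ L, (h x).length = m) (j : ℕ) {r : ℕ} (hr : r < m) :
    (L.flatMap h)[m * j + r]? = L[j]?.bind fun x => (h x)[r]? := by
  induction L generalizing j with
  | nil => simp
  | cons x L ih =>
    have hx := hL x (by simp)
    rw [List.flatMap_cons]
    cases j with
    | zero => simp [List.getElem?_append_left (hx ▸ hr : r < (h x).length)]
    | succ j =>
      rw [List.getElem?_append_right (by rw [hx, Nat.mul_succ]; omega), hx,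
        show m * (j + 1) + r - m = m * j + r by rw [Nat.mul_succ]; omega,
        ih (fun y hy => hL y (by simp [hy])) j]
      simp

lemma getElem?_flatten_replicate {β : Type*} (P : List β) {K i : ℕ} (hi : i < K * P.length) :
    (List.replicate K P).flatten[i]? = P[i % P.length]? := by
  have hn : 0 < P.length := Nat.pos_of_ne_zero (by rintro h; simp [h] at hi)
  have hq : i / P.length < K := (Nat.div_lt_iff_lt_mul hn).mpr hi
  rw [← List.flatMap_id, ← Nat.div_add_mod i P.length,
    getElem?_flatMap_of_length_eq _ (by simp) _ (Nat.mod_lt i hn), Nat.div_add_mod]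
  simp [hq]

end BlockIndex

lemma getElem?_mod_of_flatten_replicate_eq_flatMap {P Q : List ℕ} (hP : P ≠ [])
    (h : ∀ k, (List.replicate ((Q.length + 1) * k) P).flatten =
      (List.replicate k P).flatten.flatMap fun y => Q ++ [y])
    (j : ℕ) {r : ℕ} (hr : r < Q.length + 1) :
    P[((Q.length + 1) * j + r) % P.length]? = P[j % P.length]?.bind fun y => (Q ++ [y])[r]? := by
  have hn : 0 < P.length := List.length_pos_iff.mpr hP
  have hj := congrArg (·[(Q.length + 1) * j + r]?) (h (j + 1))
  rwa [getElem?_flatten_replicate _ ?_, getElem?_flatMap_of_length_eq _ (by simp) j hr,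
    getElem?_flatten_replicate _ ?_] at hj
  · exact Nat.lt_of_lt_of_le j.lt_succ_self (Nat.le_mul_of_pos_right _ hn)
  · exact Nat.lt_of_lt_of_le (by rw [Nat.mul_succ]; omega) (Nat.le_mul_of_pos_right _ hn)

theorem eq_replicate_of_flatten_replicate_eq_flatMap {P Q : List ℕ} (hP : P ≠ []) (hQ : Q ≠ [])
    (h : ∀ k, (List.replicate ((Q.length + 1) * k) P).flatten =
      (List.replicate k P).flatten.flatMap fun y => Q ++ [y]) :
    ∃ γ, P = List.replicate P.length γ ∧ Q = List.replicate Q.length γ := by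
  set n := P.length
  set m := Q.length + 1
  have hn : 0 < n := List.length_pos_iff.mpr hP
  have hm : 2 ≤ m := by have := List.length_pos_iff.mpr hQ; omega
  obtain ⟨F, hF⟩ : ∃ F : ℕ → Option ℕ, ∀ i, F i = P[i % n]? := ⟨_, fun _ => rfl⟩
  have hper : ∀ i, F (i + n) = F i := by simp [hF]
  have hblock : ∀ j r (hr : r < m), F (m * j + r) = (Q ++ [P[j % n]'(Nat.mod_lt j hn)])[r]? :=
    fun j r hr => by
      have hjr : P[(m * j + r) % n]? = P[j % n]?.bind fun y => (Q ++ [y])[r]? :=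
        getElem?_mod_of_flatten_replicate_eq_flatMap hP h j hr
      rw [hF, hjr, List.getElem?_eq_getElem (Nat.mod_lt j hn), Option.bind_some]
  have hQ : ∀ j r, r < Q.length → F (m * j + r) = Q[r]? := fun j r hr => by
    rw [hblock j r (by omega), List.getElem?_append_left hr]
  have hlast : ∀ j, F (m * j + Q.length) = F j := fun j => by
    rw [hblock j _ (by omega), List.getElem?_concat_length, hF, List.getElem?_eq_getElem]
  -- `G i` is the gap after the `i`-th occurrence of `b` in `(gapWord P)^ω`, counting from `1`
  obtain ⟨G, hG⟩ : ∃ G : ℕ → Option ℕ, ∀ i, G i = F (i + n - 1) := ⟨_, fun _ => rfl⟩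
  have hconst := apply_eq_apply_zero_of_periodic (f := G) hm hn.ne'
    (fun i => by rw [hG, hG, show i + n + n - 1 = i + n - 1 + n by omega, hper])
    (fun i => by
      rcases i with _ | i
      · rfl
      rw [hG, hG, show m * (i + 1) + n - 1 = m * i + Q.length + n by simp only [m]; ring_nf; omega,
        hper, hlast, show i + 1 + n - 1 = i + n by omega, hper])
    (fun j r hr hrm => by
      rw [hG, hG, show m * j + r + n - 1 = m * j + (r - 1) + n by omega, hper, hQ j _ (by omega),
        show r + n - 1 = m * 0 + (r - 1) + n by omega, hper, hQ 0 _ (by omega)])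
  have hF' : ∀ i, F i = F (n - 1) := fun i => by
    simpa [hG, show i + 1 + n - 1 = i + n by omega, hper] using hconst (i + 1)
  have hγ : F (n - 1) = some (P[n - 1]'(by omega)) := by
    rw [hF, Nat.mod_eq_of_lt (by omega), List.getElem?_eq_getElem]
  refine ⟨P[n - 1]'(by omega), List.eq_replicate_iff.mpr ⟨rfl, fun x hx => ?_⟩,
    List.eq_replicate_iff.mpr ⟨rfl, fun y hy => ?_⟩⟩
  · obtain ⟨i, hi, rfl⟩ := List.getElem_of_mem hx
    have := hF' i
    rwa [hF, hγ, Nat.mod_eq_of_lt hi, List.getElem?_eq_getElem hi, Option.some_inj] at this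
  · obtain ⟨r, hr, rfl⟩ := List.getElem_of_mem hy
    have := hF' (m * 0 + r)
    rwa [hQ 0 r hr, hγ, List.getElem?_eq_getElem hr, Option.some_inj] at this

section FixedPower

variable {g : Bool → Word} {t : ℕ}

lemma eq_mul_add_of_wordPow_eq_applyG {p q m : ℕ} {P Q : List ℕ} (hP : P ≠ []) (hQ : Q ≠ [])
    (ha : g false = rep t) (hb : g true = rep q ++ gapWord Q) (hm : m ≠ 0)
    (h : wordPow (rep p ++ gapWord P) m = applyG g (rep p ++ gapWord P)) : p = t * p + q := by
  obtain ⟨x, P, rfl⟩ := List.exists_cons_of_ne_nil hP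
  obtain ⟨y, Q, rfl⟩ := List.exists_cons_of_ne_nil hQ
  obtain ⟨m, rfl⟩ := Nat.exists_eq_succ_of_ne_zero hm
  rw [wordPow_succ, applyG_append, applyG_rep g ha, gapWord_cons, applyG_cons, hb,
    gapWord_cons] at h
  simp only [List.append_assoc, List.cons_append] at h
  rw [← List.append_assoc (rep (t * p)), ← rep_add] at h
  exact (rep_append_inj (by simp) (by simp) h).1

lemma wordPow_eq_applyG_conj {x w : Word} {m : ℕ} (hx : applyG g x = x)
    (h : wordPow (x ++ w) m = applyG g (x ++ w)) : wordPow (w ++ x) m = applyG g (w ++ x) := by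
  apply List.append_cancel_left (as := x)
  rw [← wordPow_append_append_comm, h, applyG_append, applyG_append, hx, List.append_assoc]

lemma flatten_replicate_eq_flatMap_of_applyG_gapWord {z m : ℕ} {P Q : List ℕ}
    (ha : g false = rep t) (hb : g true = gapWord (Q ++ [z]))
    (h : applyG g (gapWord P) = wordPow (gapWord P) m) (k : ℕ) :
    (List.replicate (m * k) P).flatten =
      (List.replicate k P).flatten.flatMap fun y => Q ++ [z + t * y] := by
  apply gapWord_injective
  rw [← applyG_gapWord ha hb, ← wordPow_gapWord, ← wordPow_gapWord, wordPow_mul, ← h,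
    applyG_wordPow]

lemma exists_bound_of_flatten_replicate_eq_flatMap {z m : ℕ} {P Q : List ℕ} (hP : P ≠ [])
    (h : (List.replicate m P).flatten = P.flatMap fun y => Q ++ [z + t * y]) :
    ∃ M, (∀ y ∈ P, y ≤ M) ∧ (∀ y ∈ Q, y ≤ M) ∧ z + t * M ≤ M := by
  obtain ⟨M, hM, hmax⟩ := P.toFinset.exists_max_image id (List.toFinset_nonempty_iff P |>.mpr hP)
  simp only [List.mem_toFinset, id] at hM hmax
  have hsub : ∀ y ∈ P.flatMap (fun y => Q ++ [z + t * y]), y ≤ M := by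
    rw [← h]
    intro y hy
    simp only [List.mem_flatten, List.mem_replicate] at hy
    obtain ⟨_, ⟨_, rfl⟩, hy⟩ := hy
    exact hmax y hy
  refine ⟨M, hmax, fun y hy => hsub y ?_, hsub _ ?_⟩ <;> simp only [List.mem_flatMap]
  · exact ⟨M, hM, by simp [hy]⟩
  · exact ⟨M, hM, by simp⟩

theorem exists_gapWord_of_wordPow_eq_applyG {u v : Word} (ht : 1 ≤ t) (hu : 1 ≤ u.count true)
    (hv : 1 ≤ v.count true) (ha : g false = rep t) (hb : g true = v)
    (h : wordPow u (v.count true) = applyG g u) :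
    ∃ p x z : ℕ, ∃ P Q : List ℕ, u = rep p ++ gapWord (P ++ [x]) ∧ v = gapWord (Q ++ [z]) ∧
      ∀ k, (List.replicate ((Q.length + 1) * k) (P ++ [x + p])).flatten =
        (List.replicate k (P ++ [x + p])).flatten.flatMap fun y => Q ++ [z + t * y] := by
  obtain ⟨p, P, rfl, hP⟩ := exists_eq_rep_append_gapWord u
  obtain ⟨q, Q, rfl, hQ⟩ := exists_eq_rep_append_gapWord v
  have hPne : P ≠ [] := List.ne_nil_of_length_pos (by omega)
  have hQne : Q ≠ [] := List.ne_nil_of_length_pos (by omega)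
  obtain ⟨rfl, htp⟩ : q = 0 ∧ t * p = p := by
    have := eq_mul_add_of_wordPow_eq_applyG hPne hQne ha hb (by omega) h
    have := Nat.le_mul_of_pos_left p ht
    omega
  obtain ⟨P, x, rfl⟩ := (List.eq_nil_or_concat' P).resolve_left hPne
  obtain ⟨Q, z, rfl⟩ := (List.eq_nil_or_concat' Q).resolve_left hQne
  have hconj := wordPow_eq_applyG_conj (by rw [applyG_rep g ha, htp]) h
  rw [gapWord_concat_append_rep, ← hQ, List.length_append, List.length_singleton] at hconj
  exact ⟨p, x, z, P, Q, rfl, rfl, flatten_replicate_eq_flatMap_of_applyG_gapWord ha hb hconj.symm⟩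

theorem cases_of_wordPow_eq_applyG {u v : Word} (ht : 1 ≤ t) (hu : 1 ≤ u.count true)
    (hv : 1 ≤ v.count true) (ha : g false = rep t) (hb : g true = v)
    (h : wordPow u (v.count true) = applyG g u) :
    (t = 1 ∧ v = [true]) ∨
      ((∃ k : ℕ, u = List.replicate k true) ∧ (∃ k : ℕ, v = List.replicate k true)) ∨
      (t = 1 ∧ ∃ α β i j : ℕ,
        u = wordPow (rep α ++ [true] ++ rep β) i ∧
        v = wordPow ([true] ++ rep (α + β)) j ++ [true]) := by
  obtain ⟨p, x, z, P, Q, rfl, rfl, hlist⟩ := exists_gapWord_of_wordPow_eq_applyG ht hu hv ha hb h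
  have hlist₁ := hlist 1
  rw [Nat.mul_one, List.replicate_one, List.flatten_singleton] at hlist₁
  obtain ⟨M, hMP, hMQ, hM⟩ := exists_bound_of_flatten_replicate_eq_flatMap (by simp) hlist₁
  rcases Nat.eq_zero_or_pos M with rfl | hMpos
  · have hxp : x + p = 0 := Nat.le_zero.mp (hMP _ (by simp))
    obtain ⟨rfl, rfl, rfl⟩ : x = 0 ∧ p = 0 ∧ z = 0 := by omega
    refine Or.inr (Or.inl ⟨⟨_, gapWord_eq_replicate_true ?_⟩, ⟨_, gapWord_eq_replicate_true ?_⟩⟩)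
    · simpa using fun y hy => Nat.le_zero.mp (hMP y (by simp [hy]))
    · intro y hy
      rcases List.mem_append.mp hy with hy | hy
      · exact Nat.le_zero.mp (hMQ y hy)
      · exact List.mem_singleton.mp hy
  obtain ⟨rfl, rfl⟩ : t = 1 ∧ z = 0 := by
    have := Nat.mul_le_mul_right M ht
    constructor <;> nlinarith
  simp only [one_mul, zero_add] at hlist
  rcases eq_or_ne Q [] with rfl | hQ
  · exact Or.inl ⟨rfl, rfl⟩
  obtain ⟨γ, hPγ, hQγ⟩ := eq_replicate_of_flatten_replicate_eq_flatMap (by simp) hQ hlist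
  obtain ⟨-, hP, hx⟩ := List.append_eq_replicate_iff.mp hPγ
  obtain ⟨n, rfl⟩ : ∃ n, P = List.replicate n γ := ⟨_, hP⟩
  obtain ⟨j, rfl⟩ : ∃ j, Q = List.replicate j γ := ⟨_, hQγ⟩
  obtain rfl : x + p = γ := by simpa using hx
  refine Or.inr (Or.inr ⟨rfl, p, x, n + 1, j, ?_, ?_⟩)
  · rw [wordPow_rep_true_rep_succ, gapWord_append, gapWord_replicate, Nat.add_comm p x]
    simp [gapWord]
  · rw [gapWord_append, gapWord_replicate, Nat.add_comm p x]
    rfl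

end FixedPower

theorem applyG_comp_comm_iff {g₁ g₂ : Bool → Word} {t : ℕ} {u v : Word} (h₁a : g₁ false = [])
    (h₁b : g₁ true = u) (h₂a : g₂ false = rep t) (h₂b : g₂ true = v) :
    applyG g₁ ∘ applyG g₂ = applyG g₂ ∘ applyG g₁ ↔ wordPow u (v.count true) = applyG g₂ u := by
  rw [applyG_comp, applyG_comp, applyG_injective.eq_iff, funext_iff, Bool.forall_bool]
  simp [applyG_eq_wordPow_count_true g₁ h₁a, h₁a, h₁b, h₂a, h₂b, count_true_rep, wordPow_zero,
    applyG_nil]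

theorem wordPow_count_eq_applyG_of_cases {g : Bool → Word} {t : ℕ} {u v : Word}
    (ha : g false = rep t) (hb : g true = v)
    (H : (g false = [false] ∧ g true = [true]) ∨
      (t = 0 ∧ u ++ v = v ++ u) ∨
      ((∃ k : ℕ, u = List.replicate k true) ∧ (∃ k : ℕ, v = List.replicate k true)) ∨
      (t = 1 ∧ ∃ α β i j : ℕ,
        u = wordPow (rep α ++ [true] ++ rep β) i ∧
        v = wordPow ([true] ++ rep (α + β)) j ++ [true])) :
    wordPow u (v.count true) = applyG g u := by
  rcases H with ⟨ha', hb'⟩ | ⟨rfl, hc⟩ | ⟨⟨k, rfl⟩, ⟨l, rfl⟩⟩ | ⟨rfl, α, β, i, j, rfl, rfl⟩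
  · rw [applyG_eq_self g ha' hb', ← hb, hb']
    simp [wordPow]
  · obtain ⟨z, k, l, rfl, rfl⟩ := exists_wordPow_of_append_comm u v hc
    rw [applyG_eq_wordPow_count_true g ha, hb, ← wordPow_mul, ← wordPow_mul, count_wordPow,
      count_wordPow]
    ring_nf
  · rw [applyG_replicate_true, hb, wordPow, wordPow, List.flatten_replicate_replicate,
      List.flatten_replicate_replicate, List.count_replicate_self, Nat.mul_comm]
  · rw [applyG_wordPow, applyG_append, applyG_append, applyG_rep g ha, applyG_rep g ha,
      applyG_singleton, hb, one_mul, one_mul, ← wordPow_rep_true_rep_succ, ← wordPow_mul,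
      ← wordPow_mul]
    simp [List.count_append, count_wordPow, count_true_rep, Nat.mul_comm]

/-- with `g₁(a)=ε`, `g₁(b)=u`, `g₂(a)=a^t`, `g₂(b)=v`, both `u` and `v`
containing `b`, `g₁g₂ = g₂g₁` iff one of (i)–(v) holds. -/
theorem stmt17 (t : ℕ) (u v : Word)
    (hu : 1 ≤ u.count true) (hv : 1 ≤ v.count true)
    (g₁ g₂ : Bool → Word)
    (h₁a : g₁ false = []) (h₁b : g₁ true = u)
    (h₂a : g₂ false = rep t) (h₂b : g₂ true = v) :
    applyG g₁ ∘ applyG g₂ = applyG g₂ ∘ applyG g₁ ↔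
      (g₁ = g₂) ∨
      (g₂ false = [false] ∧ g₂ true = [true]) ∨
      (t = 0 ∧ u ++ v = v ++ u) ∨
      ((∃ k : ℕ, u = List.replicate k true) ∧ (∃ k : ℕ, v = List.replicate k true)) ∨
      (t = 1 ∧ ∃ α β i j : ℕ,
        u = wordPow (rep α ++ [true] ++ rep β) i ∧
        v = wordPow ([true] ++ rep (α + β)) j ++ [true]) := by
  rw [applyG_comp_comm_iff h₁a h₁b h₂a h₂b]
  constructor
  · intro h
    rcases Nat.eq_zero_or_pos t with rfl | ht
    · have huv : wordPow u (v.count true) = wordPow v (u.count true) := by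
        rw [h, applyG_eq_wordPow_count_true g₂ h₂a, h₂b]
      exact Or.inr (Or.inr (Or.inl ⟨rfl, append_comm_of_wordPow_eq (by omega) (by omega) huv⟩))
    · rcases cases_of_wordPow_eq_applyG ht hu hv h₂a h₂b h with ⟨rfl, hv₁⟩ | h | h
      · exact Or.inr (Or.inl ⟨h₂a, h₂b.trans hv₁⟩)
      · exact Or.inr (Or.inr (Or.inr (Or.inl h)))
      · exact Or.inr (Or.inr (Or.inr (Or.inr h)))
  · rintro (rfl | H)
    · obtain rfl : u = v := h₁b.symm.trans h₂b
      rw [applyG_eq_wordPow_count_true g₁ h₁a, h₁b]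
    · exact wordPow_count_eq_applyG_of_cases h₂a h₂b H
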